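/- For n > 1 and d an odd prime, any function ĝ : (Z/d)^{2n} → Z/d whose restriction to every Lagrangian subspace is linear is itself a linear functional on (Z/d)^{2n}. -/

import Mathlib

open Matrix

/-- The phase space `(ℤ/d)^{2n}` as pairs `(a_X, a_Z)`. -/
abbrev PS (d n : ℕ) := (Fin n → ZMod d) × (Fin n → ZMod d)

/-- `ω = exp(2πi/d)`. -/
noncomputable def omegaC (d : ℕ) : ℂ := Complex.exp (2 * Real.pi * Complex.I / d)

/-- `ω^k` for an exponent `k : ℤ/d`. -/
noncomputable def chi (d : ℕ) (k : ZMod d) : ℂ := omegaC d ^ k.val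

/-- Dot product over `ℤ/d`. -/
def dotZ {d n : ℕ} (x y : Fin n → ZMod d) : ZMod d := ∑ i, x i * y i

/-- The standard symplectic form `[a,b] = a_X·b_Z − b_X·a_Z`. -/
def symp {d n : ℕ} (a b : PS d n) : ZMod d := dotZ a.1 b.2 - dotZ b.1 a.2

/-- The Weyl-Heisenberg operator `T(a) = τ^{-a_X·a_Z} ⨂ᵢ Z^{(a_Z)_i} X^{(a_X)_i}`,
where `τ = ω^{(d+1)/2} = ω^{2⁻¹ mod d}` for odd `d`. -/
noncomputable def WH (d n : ℕ) (a : PS d n) :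
    Matrix (Fin n → ZMod d) (Fin n → ZMod d) ℂ :=
  Matrix.of fun q q' =>
    if q = q' + a.1 then chi d ((2⁻¹ : ZMod d) * (-(dotZ a.1 a.2)) + dotZ a.2 q) else 0

/-- An isotropic subspace of dimension `n`, i.e. a Lagrangian subspace. -/
def IsLagrangian (d n : ℕ) (L : Submodule (ZMod d) (PS d n)) : Prop :=
  (∀ a ∈ L, ∀ b ∈ L, symp a b = 0) ∧ Module.finrank (ZMod d) L = n

/-!
If `symp a b = 0`, then `a` and `b` lie in a common Lagrangian: a maximal isotropic subspace `L`
of a nondegenerate alternating form satisfies `Lᗮ = L`, hence has half the dimension. So `ĝ` is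
homogeneous and additive on orthogonal pairs. If `symp a b ≠ 0`, the orthogonal complement of
`a, b` has dimension `2n - 2 > 0` and contains a pair `u, v` with `symp u v ≠ 0`; from it (using
`2 ≠ 0`) one builds `c, e` such that `(a, c)`, `(b, e)`, `(c, e)`, `(a + c, b + e)` and
`(a + b, c + e)` are all orthogonal pairs. Evaluating `ĝ` on
`(a + b) + (c + e) = (a + c) + (b + e)` in both ways gives `ĝ (a + b) = ĝ a + ĝ b`.
-/

open Module Submodule

namespace LinearMap.BilinForm

section CommRing

variable {R M : Type*} [CommRing R] [AddCommGroup M] [Module R M] {B : LinearMap.BilinForm R M}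

lemma span_pair_le_orthogonal (hB : B.IsAlt) {x y : M} (hxy : B x y = 0) :
    span R {x, y} ≤ B.orthogonal (span R {x, y}) := by
  have hyx : B y x = 0 := hB.eq_iff.mp hxy
  intro z hz w hw
  obtain ⟨a, b, rfl⟩ := Submodule.mem_span_pair.mp hw
  obtain ⟨c, e, rfl⟩ := Submodule.mem_span_pair.mp hz
  simp only [map_add, map_smul, LinearMap.add_apply, LinearMap.smul_apply, smul_eq_mul,
    hB.self_eq_zero, hxy, hyx, mul_zero, add_zero]

end CommRing

variable {K V : Type*} [Field K] [AddCommGroup V] [Module K V] {B : LinearMap.BilinForm K V}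

lemma exists_le_orthogonal_eq [FiniteDimensional K V] (hB : B.IsAlt) {U : Submodule K V}
    (hU : U ≤ B.orthogonal U) :
    ∃ L, U ≤ L ∧ B.orthogonal L = L := by
  obtain ⟨L, ⟨hUL, hL⟩, hmax⟩ :=
    exists_maximal_of_wellFoundedGT (fun L => U ≤ L ∧ L ≤ B.orthogonal L) ⟨U, le_rfl, hU⟩
  refine ⟨L, hUL, le_antisymm (fun v hv => ?_) hL⟩
  have hvv : B v v = 0 := hB.self_eq_zero v
  have hext : L ⊔ span K {v} ≤ B.orthogonal (L ⊔ span K {v}) := by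
    intro x hx y hy
    obtain ⟨l, hl, _, hw, rfl⟩ := Submodule.mem_sup.mp hx
    obtain ⟨l', hl', _, hw', rfl⟩ := Submodule.mem_sup.mp hy
    obtain ⟨a, rfl⟩ := Submodule.mem_span_singleton.mp hw
    obtain ⟨b, rfl⟩ := Submodule.mem_span_singleton.mp hw'
    have hlv : B v l = 0 := hB.eq_iff.mp (hv l hl)
    simp only [map_add, map_smul, LinearMap.add_apply, LinearMap.smul_apply, smul_eq_mul,
      hL hl l' hl', hv l' hl', hlv, hvv, mul_zero, add_zero]
  exact hmax ⟨hUL.trans le_sup_left, hext⟩ le_sup_left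
    (Submodule.mem_sup_right (Submodule.mem_span_singleton_self v))

lemma two_mul_finrank_eq_of_orthogonal_eq [FiniteDimensional K V] (hB : B.Nondegenerate)
    {L : Submodule K V} (hL : B.orthogonal L = L) : 2 * finrank K L = finrank K V := by
  have := B.finrank_orthogonal hB L
  rw [hL] at this
  have := L.finrank_le
  omega

lemma exists_orthogonal_pair_apply_ne_zero (hB : B.IsAlt) (hB' : B.Nondegenerate)
    (hV : 2 < finrank K V) {a b : V} (hab : B a b ≠ 0) :
    ∃ u v, B a u = 0 ∧ B b u = 0 ∧ B a v = 0 ∧ B b v = 0 ∧ B u v ≠ 0 := by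
  by_contra! h
  suffices hinj : Function.Injective ((B a).prod (B b)) by
    have := LinearMap.finrank_le_finrank_of_injective hinj
    rw [finrank_prod, finrank_self] at this
    omega
  rw [← LinearMap.ker_eq_bot, Submodule.eq_bot_iff]
  intro x hx
  obtain ⟨hax, hbx⟩ : B a x = 0 ∧ B b x = 0 := Prod.mk_eq_zero.mp hx
  refine hB'.1 x fun y => ?_
  -- `p` is the projection of `y` to the hyperbolic plane spanned by `a` and `b`
  set p := (B a y / B a b) • b - (B b y / B a b) • a
  have hba : B b a = -B a b := (LinearMap.IsAlt.neg hB a b).symm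
  have hap : B a (y - p) = 0 := by
    simp [p, hB.self_eq_zero, hab]
  have hbp : B b (y - p) = 0 := by
    simp [p, hB.self_eq_zero, hba, hab]
  have hxa : B x a = 0 := hB.eq_iff.mp hax
  have hxb : B x b = 0 := hB.eq_iff.mp hbx
  calc B x y = B x p + B x (y - p) := by rw [← map_add, add_sub_cancel]
    _ = 0 := by simp [p, hxa, hxb, h x (y - p) hax hbx hap hbp]

lemma exists_orthogonal_rearrangement (hB : B.IsAlt) (hB' : B.Nondegenerate)
    (hV : 2 < finrank K V) (h2 : (2 : K) ≠ 0) {a b : V} (hab : B a b ≠ 0) :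
    ∃ c e, B a c = 0 ∧ B b e = 0 ∧ B c e = 0 ∧
      B (a + c) (b + e) = 0 ∧ B (a + b) (c + e) = 0 := by
  obtain ⟨u, v, hau, hbu, hav, hbv, huv⟩ := exists_orthogonal_pair_apply_ne_zero hB hB' hV hab
  have hub : B u b = 0 := hB.eq_iff.mp hbu
  have hba : B b a = -B a b := (LinearMap.IsAlt.neg hB a b).symm
  have h4 : (4 : K) ≠ 0 := by
    rw [show (4 : K) = 2 * 2 by norm_num]
    exact mul_ne_zero h2 h2
  -- `c = -a/2 - u'` and `e = -b/2 + v` with `B u' v = B a b / 4`; as `u', v ⊥ a, b`, the two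
  -- nontrivial pairings `B c e` and `B (a + c) (b + e)` both equal `B a b / 4 - B u' v`.
  refine ⟨-(2⁻¹ : K) • a - (B a b / (4 * B u v)) • u, -(2⁻¹ : K) • b + v,
    ?_, ?_, ?_, ?_, ?_⟩ <;>
    simp only [map_add, map_sub, map_smul, LinearMap.add_apply, LinearMap.sub_apply,
      LinearMap.smul_apply, smul_eq_mul, hB.self_eq_zero, hau, hbu, hav, hbv, hub, hba] <;>
    field_simp <;>
    ring

theorem map_add_of_map_add_of_apply_eq_zero (hB : B.IsAlt) (hB' : B.Nondegenerate)
    (hV : 2 < finrank K V) (h2 : (2 : K) ≠ 0) {M : Type*} [AddCommGroup M] {g : V → M}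
    (hg : ∀ x y, B x y = 0 → g (x + y) = g x + g y) (x y : V) : g (x + y) = g x + g y := by
  by_cases hxy : B x y = 0
  · exact hg x y hxy
  obtain ⟨c, e, hxc, hye, hce, hxcye, hxyce⟩ :=
    exists_orthogonal_rearrangement hB hB' hV h2 hxy
  have key : g (x + y) + g (c + e) = g (x + c) + g (y + e) := by
    rw [← hg _ _ hxyce, ← hg _ _ hxcye, add_add_add_comm]
  rw [hg _ _ hce, hg _ _ hxc, hg _ _ hye, add_add_add_comm (g x)] at key
  exact add_right_cancel key

end LinearMap.BilinForm

section PhaseSpace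

variable {d n : ℕ}

lemma symp_eq_dotProduct (a b : PS d n) : symp a b = a.1 ⬝ᵥ b.2 - b.1 ⬝ᵥ a.2 := rfl

variable (d n) in
def sympForm : LinearMap.BilinForm (ZMod d) (PS d n) :=
  let D := (dotProductBilin (ZMod d) (ZMod d)).compl₁₂ (LinearMap.fst ..) (LinearMap.snd ..)
  D - D.flip

@[simp]
lemma sympForm_apply (a b : PS d n) : sympForm d n a b = symp a b := rfl

lemma sympForm_isAlt : (sympForm d n).IsAlt := fun a => sub_self (a.1 ⬝ᵥ a.2)

lemma sympForm_nondegenerate : (sympForm d n).Nondegenerate := by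
  have hrefl : LinearMap.IsRefl (sympForm d n) := LinearMap.IsAlt.isRefl sympForm_isAlt
  refine hrefl.nondegenerate_iff_separatingLeft.mpr fun x hx => ?_
  ext i
  · simpa [symp_eq_dotProduct] using hx (0, Pi.single i 1)
  · simpa [symp_eq_dotProduct] using hx (Pi.single i 1, 0)

variable [Fact d.Prime]

lemma finrank_PS : finrank (ZMod d) (PS d n) = 2 * n := by
  simp [two_mul]

lemma exists_isLagrangian_of_symp_eq_zero {x y : PS d n} (hxy : symp x y = 0) :
    ∃ L, IsLagrangian d n L ∧ x ∈ L ∧ y ∈ L := by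
  obtain ⟨L, hxyL, hL⟩ := (sympForm d n).exists_le_orthogonal_eq sympForm_isAlt
    (LinearMap.BilinForm.span_pair_le_orthogonal sympForm_isAlt hxy)
  have hdim := LinearMap.BilinForm.two_mul_finrank_eq_of_orthogonal_eq sympForm_nondegenerate hL
  rw [finrank_PS] at hdim
  have hiso (a : PS d n) (ha : a ∈ L) (b : PS d n) (hb : b ∈ L) : symp a b = 0 := by
    rw [← hL] at hb
    exact hb a ha
  exact ⟨L, ⟨hiso, by omega⟩, hxyL (subset_span (by simp)), hxyL (subset_span (by simp))⟩

end PhaseSpace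

/-- For `n > 1` and `d` an odd prime, a function `ĝ : (ℤ/d)^{2n} → ℤ/d` whose
restriction to every Lagrangian subspace is linear is globally linear. -/
theorem linear_on_lagrangians_is_linear (d n : ℕ) [Fact d.Prime] (hodd : Odd d)
    (hn : 1 < n) (gh : PS d n → ZMod d)
    (hlin : ∀ L : Submodule (ZMod d) (PS d n), IsLagrangian d n L →
      (∀ a ∈ L, ∀ b ∈ L, gh (a + b) = gh a + gh b) ∧
      (∀ (c : ZMod d), ∀ a ∈ L, gh (c • a) = c * gh a)) :
    ∃ f : PS d n →ₗ[ZMod d] ZMod d, ∀ x, gh x = f x := by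
  have h2 : (2 : ZMod d) ≠ 0 := Ring.two_ne_zero <| by
    rw [ZMod.ringChar_zmod_n]
    rintro rfl
    exact absurd hodd (by decide)
  have hdim : 2 < finrank (ZMod d) (PS d n) := by
    rw [finrank_PS]
    omega
  have map_smul (c : ZMod d) (x : PS d n) : gh (c • x) = c * gh x := by
    obtain ⟨L, hL, hx, -⟩ := exists_isLagrangian_of_symp_eq_zero (sympForm_isAlt x)
    exact (hlin L hL).2 c x hx
  have map_add_of_symp_eq_zero (x y : PS d n) (hxy : symp x y = 0) :
      gh (x + y) = gh x + gh y := by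
    obtain ⟨L, hL, hx, hy⟩ := exists_isLagrangian_of_symp_eq_zero hxy
    exact (hlin L hL).1 x hx y hy
  exact ⟨{ toFun := gh
           map_add' := LinearMap.BilinForm.map_add_of_map_add_of_apply_eq_zero sympForm_isAlt
             sympForm_nondegenerate hdim h2 map_add_of_symp_eq_zero
           map_smul' := map_smul }, fun _ => rfl⟩
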